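/- arXiv:2005.07829 — 2 statements merged into one kernel-verified Lean document; each statement's English description precedes it below -/
import Mathlib

section
/- Let L and M be linear orders and n ∈ ℕ. If L order-embeds into M and M has Hausdorff rank at most n, then L has Hausdorff rank at most n. -/
/-! By induction on `n`, `F^n_M (f x) (f y)` implies `F^n_L x y` for an order embedding `f`.
For the successor step, `f` maps `[x, y]` into `[f x, f y]`, and by the induction hypothesis
points of `[x, y]` in different `F^n_L`-classes are sent to different `F^n_M`-classes; so the
finitely many `F^n_M`-classes meeting `[f x, f y]` bound the number of `F^n_L`-classes meeting
`[x, y]`. -/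

/-- The `n`-block relation `F^n_L`: `F^0_L` is equality, and `F^{n+1}_L x y` holds iff
only finitely many `F^n_L`-equivalence classes contain a point of the closed interval
between `x` and `y`. -/
def nBlockRel {L : Type*} [LinearOrder L] : ℕ → L → L → Prop
  | 0, x, y => x = y
  | n + 1, x, y =>
      {C : Set L | (∃ w : L, C = {z | nBlockRel n w z}) ∧ (C ∩ Set.uIcc x y).Nonempty}.Finite

open Set Function

theorem Set.Finite.image_of_factorsThrough {α β γ : Type*} {s : Set α} {g : α → β}
    {h : α → γ} (hg : (g '' s).Finite) (hgh : ∀ a ∈ s, ∀ b ∈ s, g a = g b → h a = h b) :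
    (h '' s).Finite := by
  obtain rfl | ⟨a₀, -⟩ := s.eq_empty_or_nonempty
  · simp
  have : Nonempty α := ⟨a₀⟩
  refine hg.of_surjOn (h ∘ invFunOn g s) ?_
  rintro _ ⟨a, ha, rfl⟩
  have hga : ∃ b ∈ s, g b = g a := ⟨a, ha, rfl⟩
  exact ⟨g a, mem_image_of_mem g ha, hgh _ (invFunOn_mem hga) _ ha (invFunOn_eq hga)⟩

theorem Equivalence.setOf_eq_setOf_iff {α : Type*} {r : α → α → Prop} (hr : Equivalence r)
    {a b : α} : {u | r a u} = {u | r b u} ↔ r a b :=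
  ⟨fun h => (Set.ext_iff.1 h b).2 (hr.refl b),
    fun h => Set.ext fun _ => ⟨hr.trans (hr.symm h), hr.trans h⟩⟩

theorem Equivalence.setOf_classes_meeting_eq_image {α : Type*} {r : α → α → Prop}
    (hr : Equivalence r) (s : Set α) :
    {C : Set α | (∃ w, C = {u | r w u}) ∧ (C ∩ s).Nonempty} =
      (fun z => {u | r z u}) '' s := by
  ext C
  constructor
  · rintro ⟨⟨w, rfl⟩, z, hwz, hz⟩
    exact ⟨z, hz, (hr.setOf_eq_setOf_iff.2 hwz).symm⟩
  · rintro ⟨z, hz, rfl⟩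
    exact ⟨⟨z, rfl⟩, z, hr.refl z, hz⟩

section

variable {L : Type*} [LinearOrder L]

def nBlockClass (n : ℕ) (x : L) : Set L := {z | nBlockRel n x z}

theorem nBlockRel_succ_iff_of_equivalence {n : ℕ} (hn : Equivalence (nBlockRel (L := L) n))
    {x y : L} : nBlockRel (n + 1) x y ↔ (nBlockClass n '' uIcc x y).Finite := by
  rw [nBlockRel, hn.setOf_classes_meeting_eq_image]
  rfl

theorem nBlockRel_equivalence : ∀ n : ℕ, Equivalence (nBlockRel (L := L) n)
  | 0 => ⟨fun _ => rfl, Eq.symm, Eq.trans⟩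
  | n + 1 => by
    have hsucc {x y : L} :=
      nBlockRel_succ_iff_of_equivalence (nBlockRel_equivalence n) (x := x) (y := y)
    refine ⟨fun x => hsucc.2 ?_, fun {x y} hxy => hsucc.2 ?_, fun {x y z} hxy hyz => hsucc.2 ?_⟩
    · simp only [uIcc_self, image_singleton, finite_singleton]
    · simpa only [uIcc_comm] using hsucc.1 hxy
    · refine ((hsucc.1 hxy).union (hsucc.1 hyz)).subset ?_
      rw [← image_union]
      exact image_mono uIcc_subset_uIcc_union_uIcc

theorem nBlockRel_succ_iff {n : ℕ} {x y : L} :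
    nBlockRel (n + 1) x y ↔ (nBlockClass n '' uIcc x y).Finite :=
  nBlockRel_succ_iff_of_equivalence (nBlockRel_equivalence n)

theorem nBlockClass_eq_iff {n : ℕ} {x y : L} :
    nBlockClass n x = nBlockClass n y ↔ nBlockRel n x y :=
  (nBlockRel_equivalence n).setOf_eq_setOf_iff

end

theorem nBlockRel_of_orderEmbedding {L M : Type*} [LinearOrder L] [LinearOrder M] (f : L ↪o M) :
    ∀ (n : ℕ) (x y : L), nBlockRel n (f x) (f y) → nBlockRel n x y
  | 0, _, _, h => f.injective h
  | n + 1, x, y, h => by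
    rw [nBlockRel_succ_iff] at h ⊢
    refine Set.Finite.image_of_factorsThrough (g := nBlockClass n ∘ f) (h.subset ?_) ?_
    · rw [image_comp]
      exact image_mono (f.monotone.mapsTo_uIcc.image_subset)
    · intro a _ b _ hab
      exact nBlockClass_eq_iff.2 (nBlockRel_of_orderEmbedding f n a b (nBlockClass_eq_iff.1 hab))

/-- If `L` order-embeds into `M` and `M` has Hausdorff rank at most `n`
(i.e. `F^n_M` holds of every pair), then `L` has Hausdorff rank at most `n`. -/
theorem hausdorffRank_le_of_embeds {L M : Type*} [LinearOrder L] [LinearOrder M]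
    (n : ℕ) (h : Nonempty (L ↪o M)) (hM : ∀ x y : M, nBlockRel n x y) :
    ∀ x y : L, nBlockRel n x y := by
  obtain ⟨f⟩ := h
  exact fun x y => nBlockRel_of_orderEmbedding f n x y (hM (f x) (f y))
end

section
/- If a linear order L has finite Hausdorff rank, i.e., F^n_L holds of every pair of elements of L for some n ∈ ℕ, then L is scattered. -/
lemma nBlockRel_equivalence_s16 {L : Type*} [LinearOrder L] (n : ℕ) :
    Equivalence (fun x y : L => nBlockRel n x y) := by
  induction n with
  | zero => exact ⟨fun x => rfl, fun h => h.symm, fun h h' => h.trans h'⟩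
  | succ n ih =>
    have symm : ∀ {x y : L}, nBlockRel (n + 1) x y → nBlockRel (n + 1) y x := by
      intro x y h
      show Set.Finite _
      rw [show Set.uIcc y x = Set.uIcc x y from Set.uIcc_comm y x]
      exact h
    have trans : ∀ {x y z : L},
        nBlockRel (n + 1) x y → nBlockRel (n + 1) y z → nBlockRel (n + 1) x z := by
      intro x y z hxy hyz
      apply Set.Finite.subset ((Set.Finite.union hxy hyz))
      rintro C ⟨hw, p, hpC, hp⟩
      rcases Set.uIcc_subset_uIcc_union_uIcc (a := x) (b := y) (c := z) hp with h | h
      · exact Or.inl ⟨hw, p, hpC, h⟩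
      · exact Or.inr ⟨hw, p, hpC, h⟩
    have refl : ∀ x : L, nBlockRel (n + 1) x x := by
      intro x
      apply Set.Finite.subset (Set.finite_singleton {z | nBlockRel n x z})
      rintro C ⟨⟨w, rfl⟩, p, hpC, hp⟩
      rw [Set.uIcc_self, Set.mem_singleton_iff] at hp
      rw [hp] at hpC
      have hwx : nBlockRel n w x := hpC
      simp only [Set.mem_singleton_iff]
      ext z
      exact ⟨fun hz => ih.trans (ih.symm hwx) hz, fun hz => ih.trans hwx hz⟩
    exact ⟨refl, symm, trans⟩

lemma not_nBlockRel_of_embedding {L : Type*} [LinearOrder L] (n : ℕ) (f : ℚ ↪o L)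
    {a b : ℚ} (hab : a < b) : ¬ nBlockRel n (f a) (f b) := by
  induction n generalizing a b with
  | zero => exact fun h => hab.ne (f.injective h)
  | succ n ih =>
    intro h
    have hmaps : Set.MapsTo (fun q : ℚ => {z : L | nBlockRel n (f q) z}) (Set.Ioo a b)
        {C : Set L | (∃ w : L, C = {z | nBlockRel n w z}) ∧
          (C ∩ Set.uIcc (f a) (f b)).Nonempty} := by
      intro q hq
      refine ⟨⟨f q, rfl⟩, f q, (nBlockRel_equivalence_s16 n).refl (f q), ?_⟩
      rw [Set.uIcc_of_le (f.le_iff_le.mpr hab.le)]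
      exact ⟨f.le_iff_le.mpr hq.1.le, f.le_iff_le.mpr hq.2.le⟩
    obtain ⟨q, hq, r, hr, hne, heq⟩ :=
      (Set.Ioo_infinite hab).exists_ne_map_eq_of_mapsTo hmaps h
    have key : ∀ {q r : ℚ}, ({z : L | nBlockRel n (f q) z} = {z : L | nBlockRel n (f r) z}) →
        nBlockRel n (f q) (f r) := by
      intro q r hqr
      have : f r ∈ {z : L | nBlockRel n (f r) z} := (nBlockRel_equivalence_s16 n).refl (f r)
      rw [← hqr] at this
      exact this
    rcases hne.lt_or_gt with hlt | hlt
    · exact ih hlt (key heq)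
    · exact ih hlt (key heq.symm)

/-- If a linear order `L` has finite Hausdorff rank, i.e. `F^n_L` holds of every pair of
elements for some `n ∈ ℕ`, then `L` is scattered: there is no order embedding of `ℚ`
into `L`. -/
theorem scattered_of_finite_hausdorffRank (L : Type*) [LinearOrder L]
    (h : ∃ n : ℕ, ∀ x y : L, nBlockRel n x y) : ¬ Nonempty (ℚ ↪o L) := by
  rintro ⟨f⟩
  obtain ⟨n, hn⟩ := h
  exact not_nBlockRel_of_embedding n f (by norm_num : (0:ℚ) < 1) (hn _ _)
end
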